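/- arXiv:1203.0193 — 4 statements merged into one kernel-verified Lean document; each statement's English description precedes it below -/
import Mathlib

section
/- Let A_d be the collection of axis-parallel half-spaces in R^d, i.e., sets of the form {x in R^d : x_i ≤ a} for some coordinate i in {1,...,d} and some a in R. Then the VC dimension of A_d equals max{ n : binomial(n, floor(n/2)) ≤ d }. -/
open Real

/-- A finite set `s` is shattered by the set system `𝒜` if every subset of `s`
is realized as an intersection of `s` with a member of `𝒜`. -/
def Shatters {X : Type*} (𝒜 : Set (Set X)) (s : Finset X) : Prop :=
  ∀ t : Set X, t ⊆ ↑s → ∃ A ∈ 𝒜, (↑s : Set X) ∩ A = t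

/-- Axis-parallel lower half-spaces of ℝ^d. -/
def axisCuts (d : ℕ) : Set (Set (Fin d → ℝ)) :=
  {S | ∃ (i : Fin d) (a : ℝ), S = {x | x i ≤ a}}


def IsSCD (u : Finset ℕ) (a : Finset ℕ → ℕ) (F : Finset ℕ → ℕ → Finset ℕ) : Prop :=
  ∀ S, S ⊆ u →
    (a S ≤ S.card ∧ S.card + a S ≤ u.card) ∧
    F S S.card = S ∧
    (∀ k, a S ≤ k → k + a S ≤ u.card →
      (F S k).card = k ∧ F S k ⊆ u ∧ F (F S k) = F S ∧ a (F S k) = a S) ∧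
    (∀ k l, a S ≤ k → k ≤ l → l + a S ≤ u.card → F S k ⊆ F S l)

def stepA (x : ℕ) (n : ℕ) (a : Finset ℕ → ℕ) (S : Finset ℕ) : ℕ :=
  if x ∈ S ∧ (S.erase x).card + a (S.erase x) ≠ n then a (S.erase x) + 1 else a (S.erase x)

def stepF (x : ℕ) (n : ℕ) (a : Finset ℕ → ℕ) (F : Finset ℕ → ℕ → Finset ℕ)
    (S : Finset ℕ) (k : ℕ) : Finset ℕ :=
  if x ∈ S ∧ (S.erase x).card + a (S.erase x) ≠ n then insert x (F (S.erase x) (k-1))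
  else if k + a (S.erase x) ≤ n then F (S.erase x) k
  else insert x (F (S.erase x) (n - a (S.erase x)))

lemma isSCD_step {x : ℕ} {u : Finset ℕ} (hxu : x ∉ u) {a : Finset ℕ → ℕ}
    {F : Finset ℕ → ℕ → Finset ℕ} (h : IsSCD u a F) :
    IsSCD (insert x u) (stepA x u.card a) (stepF x u.card a F) := by
  classical
  set n := u.card with hn
  intro S hS
  have hcard : (insert x u).card = n + 1 := Finset.card_insert_of_notMem hxu
  have hS0 : S.erase x ⊆ u := by
    intro y hy
    rcases Finset.mem_insert.mp (hS (Finset.mem_of_mem_erase hy)) with h' | h'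
    · exact absurd (h' ▸ hy) (Finset.notMem_erase x S)
    · exact h'
  obtain ⟨⟨h1, h2⟩, h3, h4, h5⟩ := h _ hS0
  rw [hcard]
  by_cases hc : x ∈ S ∧ (S.erase x).card + a (S.erase x) ≠ n
  · -- Case A : S inside an "upper shifted" chain
    have hxS := hc.1
    have hScard : (S.erase x).card + 1 = S.card := Finset.card_erase_add_one hxS
    refine ⟨⟨?_, ?_⟩, ?_, ?_, ?_⟩
    · rw [stepA, if_pos hc]; omega
    · rw [stepA, if_pos hc]; omega
    · rw [stepF, if_pos hc]
      have : S.card - 1 = (S.erase x).card := by omega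
      rw [this, h3, Finset.insert_erase hxS]
    · intro k hk1 hk2
      rw [stepA, if_pos hc] at hk1 hk2
      obtain ⟨hc1, hc2, hc3, hc4⟩ := h4 (k-1) (by omega) (by omega)
      have hxC : x ∉ F (S.erase x) (k-1) := fun hmem => hxu (hc2 hmem)
      have hTval : stepF x n a F S k = insert x (F (S.erase x) (k-1)) := by
        rw [stepF, if_pos hc]
      have herT : (insert x (F (S.erase x) (k-1))).erase x = F (S.erase x) (k-1) :=
        Finset.erase_insert hxC
      have hcT : x ∈ insert x (F (S.erase x) (k-1)) ∧
          ((insert x (F (S.erase x) (k-1))).erase x).card +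
            a ((insert x (F (S.erase x) (k-1))).erase x) ≠ n := by
        constructor
        · exact Finset.mem_insert_self x _
        · rw [herT, hc1, hc4]; omega
      refine ⟨?_, ?_, ?_, ?_⟩
      · rw [hTval, Finset.card_insert_of_notMem hxC, hc1]; omega
      · rw [hTval]; exact Finset.insert_subset_insert x hc2
      · rw [hTval]
        funext m
        rw [stepF, stepF, if_pos hcT, if_pos hc, herT, hc3]
      · rw [hTval, stepA, stepA, if_pos hcT, if_pos hc, herT, hc4]
    · intro k l hk hkl hl
      rw [stepA, if_pos hc] at hk hl
      rw [stepF, stepF, if_pos hc, if_pos hc]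
      exact Finset.insert_subset_insert x (h5 (k-1) (l-1) (by omega) (by omega) (by omega))
  · -- Case B
    have h2a : 2 * a (S.erase x) ≤ n := by omega
    have hcase : (x ∉ S ∧ S.erase x = S) ∨
        (x ∈ S ∧ (S.erase x).card + a (S.erase x) = n ∧ (S.erase x).card + 1 = S.card) := by
      by_cases hxS : x ∈ S
      · exact Or.inr ⟨hxS, by tauto, Finset.card_erase_add_one hxS⟩
      · exact Or.inl ⟨hxS, Finset.erase_eq_of_notMem hxS⟩
    have hstepA : stepA x n a S = a (S.erase x) := by rw [stepA, if_neg hc]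
    refine ⟨⟨?_, ?_⟩, ?_, ?_, ?_⟩
    · rw [hstepA]
      exact le_trans h1 (Finset.card_le_card (Finset.erase_subset x S))
    · rw [hstepA]
      rcases hcase with ⟨_, he⟩ | ⟨_, ht, hec⟩
      · have : S.card = (S.erase x).card := by rw [he]
        omega
      · omega
    · rw [stepF, if_neg hc]
      rcases hcase with ⟨_, he⟩ | ⟨hxS, ht, hec⟩
      · rw [he] at h2 h3 ⊢
        rw [if_pos h2, h3]
      · rw [if_neg (by omega)]
        have : n - a (S.erase x) = (S.erase x).card := by omega
        rw [this, h3, Finset.insert_erase hxS]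
    · intro k hk1 hk2
      rw [hstepA] at hk1 hk2
      by_cases hkn : k + a (S.erase x) ≤ n
      · -- stays an old chain element
        obtain ⟨hc1, hc2, hc3, hc4⟩ := h4 k hk1 hkn
        have hTval : stepF x n a F S k = F (S.erase x) k := by
          rw [stepF, if_neg hc, if_pos hkn]
        have hxT : x ∉ F (S.erase x) k := fun hmem => hxu (hc2 hmem)
        have herT : (F (S.erase x) k).erase x = F (S.erase x) k :=
          Finset.erase_eq_of_notMem hxT
        have hcT : ¬(x ∈ F (S.erase x) k ∧
            ((F (S.erase x) k).erase x).card + a ((F (S.erase x) k).erase x) ≠ n) :=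
          fun h' => hxT h'.1
        refine ⟨?_, ?_, ?_, ?_⟩
        · rw [hTval]; exact hc1
        · rw [hTval]; exact hc2.trans (Finset.subset_insert x u)
        · rw [hTval]
          funext m
          rw [stepF, stepF, if_neg hcT, if_neg hc, herT, hc3, hc4]
        · rw [hTval, stepA, stepA, if_neg hcT, if_neg hc, herT, hc4]
      · -- the new top element
        have hkeq : k + a (S.erase x) = n + 1 := by omega
        obtain ⟨hc1, hc2, hc3, hc4⟩ := h4 (n - a (S.erase x)) (by omega) (by omega)
        have hTval : stepF x n a F S k = insert x (F (S.erase x) (n - a (S.erase x))) := by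
          rw [stepF, if_neg hc, if_neg hkn]
        have hxC : x ∉ F (S.erase x) (n - a (S.erase x)) := fun hmem => hxu (hc2 hmem)
        have herT : (insert x (F (S.erase x) (n - a (S.erase x)))).erase x
            = F (S.erase x) (n - a (S.erase x)) := Finset.erase_insert hxC
        have hcT : ¬(x ∈ insert x (F (S.erase x) (n - a (S.erase x))) ∧
            ((insert x (F (S.erase x) (n - a (S.erase x)))).erase x).card +
              a ((insert x (F (S.erase x) (n - a (S.erase x)))).erase x) ≠ n) := by
          intro h'
          apply h'.2
          rw [herT, hc1, hc4]
          omega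
        refine ⟨?_, ?_, ?_, ?_⟩
        · rw [hTval, Finset.card_insert_of_notMem hxC, hc1]; omega
        · rw [hTval]; exact Finset.insert_subset_insert x hc2
        · rw [hTval]
          funext m
          rw [stepF, stepF, if_neg hcT, if_neg hc, herT, hc3, hc4]
        · rw [hTval, stepA, stepA, if_neg hcT, if_neg hc, herT, hc4]
    · intro k l hk hkl hl
      rw [hstepA] at hk hl
      rw [stepF, stepF, if_neg hc, if_neg hc]
      by_cases hln : l + a (S.erase x) ≤ n
      · rw [if_pos hln, if_pos (by omega)]
        exact h5 k l hk hkl hln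
      · rw [if_neg hln]
        by_cases hkn : k + a (S.erase x) ≤ n
        · rw [if_pos hkn]
          exact (h5 k (n - a (S.erase x)) hk (by omega) (by omega)).trans
            (Finset.subset_insert x _)
        · rw [if_neg hkn]

lemma exists_isSCD (u : Finset ℕ) : ∃ a F, IsSCD u a F := by
  classical
  induction u using Finset.induction_on with
  | empty =>
      refine ⟨fun _ => 0, fun _ _ => ∅, ?_⟩
      intro S hS
      have hS' : S = ∅ := Finset.subset_empty.mp hS
      subst hS'
      refine ⟨⟨le_refl _, by simp⟩, by simp, ?_, ?_⟩
      · intro k hk1 hk2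
        simp at hk2 ⊢
        omega
      · intro k l hk hkl hl
        exact Finset.Subset.refl _
  | insert _ _ hxu ih =>
      obtain ⟨a, F, hF⟩ := ih
      exact ⟨_, _, isSCD_step hxu hF⟩

lemma shatter_of_choose_le {d n : ℕ} (hd : 1 ≤ d) (h : n.choose (n/2) ≤ d) :
    ∃ s : Finset (Fin d → ℝ), s.card = n ∧ Shatters (axisCuts d) s := by
  classical
  obtain ⟨a, F, hF⟩ := exists_isSCD (Finset.range n)
  set u := Finset.range n with hu
  have hun : u.card = n := Finset.card_range n
  set M : Finset (Finset ℕ) := u.powersetCard (n/2) with hM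
  have hMcard : M.card ≤ d := by
    rw [hM, Finset.card_powersetCard, hun]; exact h
  have hmid : ∀ S, S ⊆ u → F S (n/2) ∈ M ∧ F (F S (n/2)) = F S ∧ a (F S (n/2)) = a S := by
    intro S hSu
    obtain ⟨⟨h1, h2⟩, h3, h4, h5⟩ := hF S hSu
    rw [hun] at h2
    obtain ⟨hc1, hc2, hc3, hc4⟩ := h4 (n/2) (by omega) (by rw [hun]; omega)
    exact ⟨Finset.mem_powersetCard.mpr ⟨hc2, hc1⟩, hc3, hc4⟩
  have hchain : ∀ S T, S ⊆ u → T ⊆ u → F S (n/2) = F T (n/2) → S.card ≤ T.card → S ⊆ T := by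
    intro S T hSu hTu hmideq hcards
    obtain ⟨_, hSF, hSa⟩ := hmid S hSu
    obtain ⟨_, hTF, hTa⟩ := hmid T hTu
    have hFST : F S = F T := by rw [← hSF, ← hTF, hmideq]
    have haST : a S = a T := by rw [← hSa, ← hTa, hmideq]
    obtain ⟨⟨h1S, h2S⟩, h3S, h4S, h5S⟩ := hF S hSu
    obtain ⟨⟨h1T, h2T⟩, h3T, h4T, h5T⟩ := hF T hTu
    have hsub : F S S.card ⊆ F S T.card :=
      h5S S.card T.card h1S hcards (by rw [haST]; exact h2T)
    rw [h3S, hFST, h3T] at hsub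
    exact hsub
  have hd0 : 0 < d := hd
  set idx : Finset ℕ → Fin d := fun T => ⟨M.toList.idxOf T % d, Nat.mod_lt _ hd0⟩ with hidx
  have hidxinj : ∀ T ∈ M, ∀ T' ∈ M, idx T = idx T' → T = T' := by
    intro T hT T' hT' he
    have hl1 : M.toList.idxOf T < d :=
      lt_of_lt_of_le (List.idxOf_lt_length_iff.mpr (Finset.mem_toList.mpr hT))
        (le_trans (le_of_eq (Finset.length_toList M)) hMcard)
    have hl2 : M.toList.idxOf T' < d :=
      lt_of_lt_of_le (List.idxOf_lt_length_iff.mpr (Finset.mem_toList.mpr hT'))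
        (le_trans (le_of_eq (Finset.length_toList M)) hMcard)
    have hee : M.toList.idxOf T = M.toList.idxOf T' := by
      have := congrArg Fin.val he
      simpa [hidx, Nat.mod_eq_of_lt hl1, Nat.mod_eq_of_lt hl2] using this
    have hlen1 : M.toList.idxOf T < M.toList.length :=
      List.idxOf_lt_length_iff.mpr (Finset.mem_toList.mpr hT)
    have hlen2 : M.toList.idxOf T' < M.toList.length :=
      List.idxOf_lt_length_iff.mpr (Finset.mem_toList.mpr hT')
    calc T = M.toList.get ⟨M.toList.idxOf T, hlen1⟩ := (List.idxOf_get hlen1).symm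
      _ = M.toList.get ⟨M.toList.idxOf T', hlen2⟩ := congrArg M.toList.get (Fin.ext hee)
      _ = T' := List.idxOf_get hlen2
  set g : Finset ℕ → Fin d := fun S => idx (F S (n/2)) with hg
  set cand : Fin d → ℕ → Finset ℕ :=
    fun i j => (u.powerset.filter (fun S => g S = i ∧ j ∈ S)).image Finset.card with hcand
  set N : Fin d → ℕ → ℕ := fun i j =>
    if hne : (cand i j).Nonempty then (cand i j).min' hne else n + 1 with hN
  have key : ∀ S, S ⊆ u → ∀ j, (N (g S) j ≤ S.card ↔ j ∈ S) := by
    intro S hSu j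
    constructor
    · intro hle
      by_cases hne : (cand (g S) j).Nonempty
      · have hmin : N (g S) j = (cand (g S) j).min' hne := by
          rw [hN]; exact dif_pos hne
        have hmem : (cand (g S) j).min' hne ∈ cand (g S) j := Finset.min'_mem _ _
        obtain ⟨S', hS', hcard'⟩ := Finset.mem_image.mp hmem
        obtain ⟨hS'pow, hgS', hjS'⟩ := Finset.mem_filter.mp hS'
        have hS'u := Finset.mem_powerset.mp hS'pow
        have hmideq : F S' (n/2) = F S (n/2) :=
          hidxinj _ (hmid S' hS'u).1 _ (hmid S hSu).1 hgS'
        have hsub : S' ⊆ S := hchain S' S hS'u hSu hmideq (by omega)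
        exact hsub hjS'
      · exfalso
        have : N (g S) j = n + 1 := by rw [hN]; exact dif_neg hne
        have hcle : S.card ≤ n := hun ▸ Finset.card_le_card hSu
        omega
    · intro hj
      have hSmem : S.card ∈ cand (g S) j := by
        rw [hcand]
        exact Finset.mem_image_of_mem _
          (Finset.mem_filter.mpr ⟨Finset.mem_powerset.mpr hSu, rfl, hj⟩)
      have hne : (cand (g S) j).Nonempty := ⟨_, hSmem⟩
      have : N (g S) j = (cand (g S) j).min' hne := by rw [hN]; exact dif_pos hne
      rw [this]
      exact Finset.min'_le _ _ hSmem
  set pts : ℕ → (Fin d → ℝ) := fun j i => (N i j : ℝ) with hpts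
  have hptsinj : Set.InjOn pts u := by
    intro j hj k hk hjk
    by_contra hne
    have hju : ({j} : Finset ℕ) ⊆ u := Finset.singleton_subset_iff.mpr hj
    have h1 : N (g {j}) j ≤ 1 := by
      have := (key {j} hju j).mpr (Finset.mem_singleton_self j)
      simpa using this
    have h2 : ¬ N (g {j}) k ≤ 1 := by
      intro hle
      have hk1 : k ∈ ({j} : Finset ℕ) := (key {j} hju k).mp (by simpa using hle)
      exact hne ((Finset.mem_singleton.mp hk1).symm ▸ rfl)
    have : pts j (g {j}) = pts k (g {j}) := by rw [hjk]
    rw [hpts] at this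
    have hNeq : N (g {j}) j = N (g {j}) k := Nat.cast_injective this
    omega
  refine ⟨u.image pts, by rw [Finset.card_image_of_injOn hptsinj, hun], ?_⟩
  intro t ht
  set S : Finset ℕ := u.filter (fun j => pts j ∈ t) with hSdef
  have hSu : S ⊆ u := Finset.filter_subset _ _
  refine ⟨{y | y (g S) ≤ (S.card : ℝ)}, ⟨g S, (S.card : ℝ), rfl⟩, ?_⟩
  ext y
  constructor
  · rintro ⟨hys, hyA⟩
    obtain ⟨j, hju, rfl⟩ := Finset.mem_image.mp (Finset.mem_coe.mp hys)
    have hle : (N (g S) j : ℝ) ≤ (S.card : ℝ) := hyA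
    have : N (g S) j ≤ S.card := by exact_mod_cast hle
    have hjS : j ∈ S := (key S hSu j).mp this
    exact (Finset.mem_filter.mp hjS).2
  · intro hyt
    have hys : y ∈ (↑(u.image pts) : Set (Fin d → ℝ)) := ht hyt
    obtain ⟨j, hju, rfl⟩ := Finset.mem_image.mp (Finset.mem_coe.mp hys)
    have hjS : j ∈ S := Finset.mem_filter.mpr ⟨hju, hyt⟩
    refine ⟨hys, ?_⟩
    show (N (g S) j : ℝ) ≤ (S.card : ℝ)
    exact_mod_cast (key S hSu j).mpr hjS

lemma choose_le_of_shatters {d : ℕ} (hd : 1 ≤ d) (s : Finset (Fin d → ℝ))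
    (hs : Shatters (axisCuts d) s) : s.card.choose (s.card / 2) ≤ d := by
  classical
  set M := s.powersetCard (s.card / 2) with hM
  have H : ∀ U ∈ M, ∃ p : Fin d × ℝ, (↑s : Set (Fin d → ℝ)) ∩ {x | x p.1 ≤ p.2} = ↑U := by
    intro U hU
    have hUs : (↑U : Set (Fin d → ℝ)) ⊆ ↑s :=
      Finset.coe_subset.mpr (Finset.mem_powersetCard.mp hU).1
    obtain ⟨A, hA, hAU⟩ := hs ↑U hUs
    obtain ⟨i, a, rfl⟩ := hA
    exact ⟨(i, a), hAU⟩
  set f : Finset (Fin d → ℝ) → Fin d := fun U =>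
    if h : ∃ p : Fin d × ℝ, (↑s : Set (Fin d → ℝ)) ∩ {x | x p.1 ≤ p.2} = ↑U then h.choose.1
    else ⟨0, hd⟩ with hf
  have hfspec : ∀ U ∈ M, ∃ a : ℝ, (↑s : Set (Fin d → ℝ)) ∩ {x | x (f U) ≤ a} = ↑U := by
    intro U hU
    have h := H U hU
    rw [hf]
    dsimp only
    rw [dif_pos h]
    exact ⟨h.choose.2, h.choose_spec⟩
  have main : ∀ U ∈ M, ∀ V ∈ M, f U = f V → U ⊆ V ∨ V ⊆ U := by
    intro U hU V hV hfe
    obtain ⟨aU, hAU⟩ := hfspec U hU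
    obtain ⟨aV, hAV⟩ := hfspec V hV
    rcases le_total aU aV with hle | hle
    · left
      rw [← Finset.coe_subset, ← hAU, ← hAV, hfe]
      exact Set.inter_subset_inter (subset_refl _) (fun x hx => le_trans hx hle)
    · right
      rw [← Finset.coe_subset, ← hAV, ← hAU, hfe]
      exact Set.inter_subset_inter (subset_refl _) (fun x hx => le_trans hx hle)
  have hkey : Set.InjOn f ↑M := by
    intro U hU' V hV' hfe
    have hU := Finset.mem_coe.mp hU'
    have hV := Finset.mem_coe.mp hV'
    have hcU := (Finset.mem_powersetCard.mp hU).2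
    have hcV := (Finset.mem_powersetCard.mp hV).2
    rcases main U hU V hV hfe with h' | h'
    · exact Finset.eq_of_subset_of_card_le h' (by rw [hcU, hcV])
    · exact (Finset.eq_of_subset_of_card_le h' (by rw [hcV, hcU])).symm
  have hle : M.card ≤ (Finset.univ : Finset (Fin d)).card :=
    Finset.card_le_card_of_injOn f (fun _ _ => Finset.mem_univ _) hkey
  rw [hM, Finset.card_powersetCard] at hle
  simpa using hle

theorem vc_axisCuts (d : ℕ) (hd : 1 ≤ d) (V : ℕ) :
    IsGreatest {n : ℕ | ∃ s : Finset (Fin d → ℝ), s.card = n ∧ Shatters (axisCuts d) s} V ↔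
      IsGreatest {n : ℕ | n.choose (n / 2) ≤ d} V := by
  have hset : {n : ℕ | ∃ s : Finset (Fin d → ℝ), s.card = n ∧ Shatters (axisCuts d) s}
      = {n : ℕ | n.choose (n / 2) ≤ d} := by
    ext n
    simp only [Set.mem_setOf_eq]
    constructor
    · rintro ⟨s, rfl, hs⟩
      exact choose_le_of_shatters hd s hs
    · intro h
      exact shatter_of_choose_le hd h
  rw [hset]
end

section
/- Let A_d = { {x in R^d : x_i ≤ a} : 1 ≤ i ≤ d, a ∈ R }. If n points x_1,...,x_n in R^d are shattered by A_d, then binomial(n, floor(n/2)) ≤ d. -/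
open Real

theorem shattered_implies_choose_le (d n : ℕ) (s : Finset (Fin d → ℝ))
    (hcard : s.card = n) (hs : Shatters (axisCuts d) s) :
    n.choose (n / 2) ≤ d := by
  classical
  subst hcard
  set n := s.card with hn
  set k := n / 2 with hk
  have hex : ∀ t ∈ s.powersetCard k,
      ∃ i : Fin d, ∃ a : ℝ, (↑s : Set (Fin d → ℝ)) ∩ {x | x i ≤ a} = ↑t := by
    intro t ht
    have hts : (↑t : Set (Fin d → ℝ)) ⊆ ↑s := by
      exact_mod_cast (Finset.mem_powersetCard.mp ht).1
    obtain ⟨A, hA, hAt⟩ := hs ↑t hts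
    obtain ⟨i, a, rfl⟩ := hA
    exact ⟨i, a, hAt⟩
  choose f a hf using hex
  have key : ∀ t ht t' ht', a t ht ≤ a t' ht' → f t ht = f t' ht' → t ⊆ t' := by
    intro t ht t' ht' hle hfe
    intro x hx
    have hx1 : (x : Fin d → ℝ) ∈ (↑s : Set (Fin d → ℝ)) ∩ {y | y (f t ht) ≤ a t ht} := by
      rw [hf t ht]; exact_mod_cast hx
    have hx2 : (x : Fin d → ℝ) ∈ (↑s : Set (Fin d → ℝ)) ∩ {y | y (f t' ht') ≤ a t' ht'} := by
      refine ⟨hx1.1, ?_⟩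
      have := hx1.2
      rw [hfe] at this
      exact le_trans this hle
    rw [hf t' ht'] at hx2
    exact_mod_cast hx2
  have hcard_eq : ∀ t ∈ s.powersetCard k, t.card = k := fun t ht =>
    (Finset.mem_powersetCard.mp ht).2
  have hinj : ∀ t ht t' ht', f t ht = f t' ht' → t = t' := by
    intro t ht t' ht' hfe
    rcases le_total (a t ht) (a t' ht') with h | h
    · exact Finset.eq_of_subset_of_card_le (key t ht t' ht' h hfe)
        (by rw [hcard_eq t ht, hcard_eq t' ht'])
    · exact (Finset.eq_of_subset_of_card_le (key t' ht' t ht h hfe.symm)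
        (by rw [hcard_eq t ht, hcard_eq t' ht'])).symm
  have hle : (s.powersetCard k).attach.card ≤ (Finset.univ : Finset (Fin d)).card := by
    apply Finset.card_le_card_of_injOn (fun t => f t.1 t.2)
    · intro t _; exact Finset.mem_univ _
    · intro t _ t' _ h
      exact Subtype.ext (hinj t.1 t.2 t'.1 t'.2 h)
  simpa [Finset.card_powersetCard] using hle
end

section
/- Let A_d = { {x in R^d : x_i ≤ a} : 1 ≤ i ≤ d, a ∈ R }. If n is a positive integer with binomial(n, floor(n/2)) ≤ d, then there exist n points in R^d that are shattered by A_d. -/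
open Real

open Finset

structure GoodRep (n : ℕ) (rep : Finset ℕ → Finset ℕ) : Prop where
  subset : ∀ S ⊆ range n, rep S ⊆ S
  comp : ∀ S ⊆ range n, ∀ T ⊆ range n, rep S = rep T → S ⊆ T ∨ T ⊆ S
  card_le : ∀ S ⊆ range n, S.card ≤ n - (rep S).card
  exists_card : ∀ S ⊆ range n, ∀ k, (rep S).card ≤ k → k ≤ n - (rep S).card →
      ∃ T ⊆ range n, rep T = rep S ∧ T.card = k

def extRep (n : ℕ) (rep : Finset ℕ → Finset ℕ) (S : Finset ℕ) : Finset ℕ :=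
  if n ∈ S then
    (if (S.erase n).card = n - (rep (S.erase n)).card then rep (S.erase n)
     else insert n (rep (S.erase n)))
  else rep S

lemma goodRep_step (n : ℕ) (rep : Finset ℕ → Finset ℕ) (G : GoodRep n rep) :
    GoodRep (n+1) (extRep n rep) := by
  -- basic facts
  have hnotn : ∀ T ⊆ range n, n ∉ T := fun T hT h => by
    have := hT h; simp at this
  have hrsub : ∀ T ⊆ range n, rep T ⊆ T := G.subset
  have hnrep : ∀ T ⊆ range n, n ∉ rep T := fun T hT h => hnotn T hT (hrsub T hT h)
  have hercard : ∀ T ⊆ range n, (rep T).card ≤ T.card :=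
    fun T hT => card_le_card (hrsub T hT)
  have herase : ∀ S ⊆ range (n+1), S.erase n ⊆ range n := by
    intro S hS x hx
    have hx1 := mem_of_mem_erase hx
    have hx2 := ne_of_mem_erase hx
    have := hS hx1
    simp only [mem_range] at this ⊢
    omega
  have hnoin : ∀ S ⊆ range (n+1), n ∉ S → S ⊆ range n := by
    intro S hS hn x hx
    have := hS hx
    simp only [mem_range] at this ⊢
    rcases Nat.lt_succ_iff_lt_or_eq.mp this with h | h
    · exact h
    · exact absurd (h ▸ hx) hn
  constructor
  · -- subset
    intro S hS
    unfold extRep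
    split_ifs with h1 h2
    · exact (hrsub _ (herase S hS)).trans (erase_subset _ _)
    · exact insert_subset h1 ((hrsub _ (herase S hS)).trans (erase_subset _ _))
    · exact hrsub S (hnoin S hS h1)
  · -- comp
    intro S hS T hT hrep
    unfold extRep at hrep
    by_cases hnS : n ∈ S <;> by_cases hnT : n ∈ T <;>
      simp only [hnS, hnT, if_pos, if_neg, if_true, if_false] at hrep
    · -- both contain n
      have hS' := herase S hS
      have hT' := herase T hT
      split_ifs at hrep with h1 h2 h2
      · -- both max
        have hcomp := G.comp _ hS' _ hT' hrep
        have : (S.erase n).card = (T.erase n).card := by rw [h1, h2, hrep]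
        have heq : S.erase n = T.erase n := by
          rcases hcomp with hc | hc
          · exact eq_of_subset_of_card_le hc this.ge
          · exact (eq_of_subset_of_card_le hc this.le).symm
        left
        intro x hx
        by_cases hxn : x = n
        · exact hxn ▸ hnT
        · exact mem_of_mem_erase (heq ▸ mem_erase_of_ne_of_mem hxn hx)
      · -- S max, T not: rep (S.erase n) = insert n (rep (T.erase n)), impossible
        exact absurd (hrep ▸ mem_insert_self n _) (hnrep _ hS')
      · exact absurd (hrep.symm ▸ mem_insert_self n _) (hnrep _ hT')
      · -- both else
        have h3 : rep (S.erase n) = rep (T.erase n) := by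
          have := congrArg (Finset.erase · n) hrep
          simpa [erase_insert_of_ne, Finset.erase_insert,
            hnrep _ hS', hnrep _ hT', erase_eq_of_notMem] using this
        rcases G.comp _ hS' _ hT' h3 with hc | hc
        · left
          intro x hx
          by_cases hxn : x = n
          · exact hxn ▸ hnT
          · exact mem_of_mem_erase (hc (mem_erase_of_ne_of_mem hxn hx))
        · right
          intro x hx
          by_cases hxn : x = n
          · exact hxn ▸ hnS
          · exact mem_of_mem_erase (hc (mem_erase_of_ne_of_mem hxn hx))
    · -- n ∈ S, n ∉ T
      have hS' := herase S hS
      have hT' := hnoin T hT hnT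
      split_ifs at hrep with h1
      · -- S max case: rep (S.erase n) = rep T
        rcases G.comp _ hS' _ hT' hrep with hc | hc
        · -- S.erase n ⊆ T, but S.erase n is max so T ⊆ S.erase n too
          have : T.card ≤ (S.erase n).card := by
            have := G.card_le T hT'
            rw [← hrep] at this
            omega
          have heq : S.erase n = T := eq_of_subset_of_card_le hc this
          right
          exact heq ▸ (erase_subset _ _)
        · right
          exact hc.trans (erase_subset _ _)
      · exact absurd (hrep ▸ mem_insert_self n _) (hnrep _ hT')
    · -- n ∉ S, n ∈ T : symmetric
      have hT' := herase T hT
      have hS' := hnoin S hS hnS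
      split_ifs at hrep with h1
      · rcases G.comp _ hS' _ hT' hrep with hc | hc
        · left; exact hc.trans (erase_subset _ _)
        · have : S.card ≤ (T.erase n).card := by
            have := G.card_le S hS'
            rw [hrep] at this
            omega
          have heq : T.erase n = S := eq_of_subset_of_card_le hc this
          left
          exact heq ▸ (erase_subset _ _)
      · exact absurd (hrep ▸ mem_insert_self n _) (hnrep _ hS')
    · exact G.comp _ (hnoin S hS hnS) _ (hnoin T hT hnT) hrep
  · -- card_le
    intro S hS
    unfold extRep
    split_ifs with h1 h2
    · have hS' := herase S hS
      have h4 := hercard _ hS'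
      have h5 := G.card_le _ hS'
      have h6 : S.card = (S.erase n).card + 1 := by
        rw [card_erase_of_mem h1]
        have : 0 < S.card := card_pos.mpr ⟨n, h1⟩
        omega
      omega
    · have hS' := herase S hS
      have h4 := hercard _ hS'
      have h5 := G.card_le _ hS'
      have h6 : S.card = (S.erase n).card + 1 := by
        rw [card_erase_of_mem h1]
        have : 0 < S.card := card_pos.mpr ⟨n, h1⟩
        omega
      rw [card_insert_of_notMem (hnrep _ hS')]
      omega
    · have hS' := hnoin S hS h1
      have h5 := G.card_le _ hS'
      omega
  · -- exists_card
    intro S hS k hk1 hk2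
    by_cases hnS : n ∈ S
    · have hS' := herase S hS
      by_cases h1 : (S.erase n).card = n - (rep (S.erase n)).card
      · -- value is r = rep (S.erase n)
        have hval : extRep n rep S = rep (S.erase n) := by
          unfold extRep; rw [if_pos hnS, if_pos h1]
        rw [hval] at hk1 hk2 ⊢
        set U := S.erase n with hU
        have h2m : 2 * (rep U).card ≤ n := by
          have := G.card_le U hS'; have := hercard U hS'; omega
        by_cases hkn : k ≤ n - (rep U).card
        · obtain ⟨T, hT1, hT2, hT3⟩ := G.exists_card U hS' k hk1 hkn
          refine ⟨T, hT1.trans (range_subset_range.mpr (by omega)), ?_, hT3⟩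
          unfold extRep
          rw [if_neg (hnotn T hT1), hT2]
        · obtain ⟨T, hT1, hT2, hT3⟩ := G.exists_card U hS' (n - (rep U).card)
            (by omega) le_rfl
          refine ⟨insert n T, ?_, ?_, ?_⟩
          · exact insert_subset (by simp) (hT1.trans (range_subset_range.mpr (by omega)))
          · unfold extRep
            rw [if_pos (mem_insert_self n T),
              erase_insert (hnotn T hT1), if_pos (by rw [hT2]; exact hT3), hT2]
          · rw [card_insert_of_notMem (hnotn T hT1), hT3]
            omega
      · -- value is insert n r
        have hval : extRep n rep S = insert n (rep (S.erase n)) := by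
          unfold extRep; rw [if_pos hnS, if_neg h1]
        rw [hval] at hk1 hk2 ⊢
        set U := S.erase n with hU
        have hnr := hnrep U hS'
        have h2m : 2 * (rep U).card ≤ n := by
          have := G.card_le U hS'; have := hercard U hS'; omega
        have hUlt : U.card < n - (rep U).card :=
          lt_of_le_of_ne (G.card_le U hS') h1
        rw [card_insert_of_notMem hnr] at hk1 hk2
        obtain ⟨T, hT1, hT2, hT3⟩ := G.exists_card U hS' (k - 1) (by omega) (by omega)
        refine ⟨insert n T, ?_, ?_, ?_⟩
        · exact insert_subset (by simp) (hT1.trans (range_subset_range.mpr (by omega)))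
        · unfold extRep
          rw [if_pos (mem_insert_self n T), erase_insert (hnotn T hT1),
            if_neg (by rw [hT2]; omega), hT2]
        · rw [card_insert_of_notMem (hnotn T hT1), hT3]
          omega
    · have hS' := hnoin S hS hnS
      have hval : extRep n rep S = rep S := by
        unfold extRep; rw [if_neg hnS]
      rw [hval] at hk1 hk2 ⊢
      have h2m : 2 * (rep S).card ≤ n := by
        have := G.card_le S hS'; have := hercard S hS'; omega
      by_cases hkn : k ≤ n - (rep S).card
      · obtain ⟨T, hT1, hT2, hT3⟩ := G.exists_card S hS' k hk1 hkn
        refine ⟨T, hT1.trans (range_subset_range.mpr (by omega)), ?_, hT3⟩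
        unfold extRep
        rw [if_neg (hnotn T hT1), hT2]
      · obtain ⟨T, hT1, hT2, hT3⟩ := G.exists_card S hS' (n - (rep S).card)
          (by omega) le_rfl
        refine ⟨insert n T, ?_, ?_, ?_⟩
        · exact insert_subset (by simp) (hT1.trans (range_subset_range.mpr (by omega)))
        · unfold extRep
          rw [if_pos (mem_insert_self n T), erase_insert (hnotn T hT1),
            if_pos (by rw [hT2]; exact hT3), hT2]
        · rw [card_insert_of_notMem (hnotn T hT1), hT3]
          omega

lemma exists_goodRep (n : ℕ) : ∃ rep, GoodRep n rep := by
  induction n with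
  | zero =>
    refine ⟨fun _ => ∅, ?_, ?_, ?_, ?_⟩
    · intro S hS; exact empty_subset S
    · intro S hS T hT _
      have : S = ∅ := subset_empty.mp (by simpa using hS)
      simp [this]
    · intro S hS
      have : S = ∅ := subset_empty.mp (by simpa using hS)
      simp [this]
    · intro S hS k hk1 hk2
      simp at hk1 hk2
      exact ⟨∅, by simp, rfl, by simp at hk2 ⊢; omega⟩
  | succ n ih =>
    obtain ⟨rep, G⟩ := ih
    exact ⟨extRep n rep, goodRep_step n rep G⟩

lemma exists_mid {n : ℕ} {rep : Finset ℕ → Finset ℕ} (G : GoodRep n rep)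
    (S : Finset ℕ) (hS : S ⊆ range n) :
    ∃ T ⊆ range n, rep T = rep S ∧ T.card = n / 2 := by
  have h1 := Finset.card_le_card (G.subset S hS)
  have h2 := G.card_le S hS
  have h3 : S.card ≤ n := by simpa using Finset.card_le_card hS
  exact G.exists_card S hS (n / 2) (by omega) (by omega)

noncomputable def midSet (n : ℕ) (rep : Finset ℕ → Finset ℕ) (r : Finset ℕ) : Finset ℕ :=
  if hr : ∃ T ⊆ Finset.range n, rep T = r ∧ T.card = n / 2 then hr.choose else ∅

lemma midSet_spec {n : ℕ} {rep : Finset ℕ → Finset ℕ} {r : Finset ℕ}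
    (hr : ∃ T ⊆ Finset.range n, rep T = r ∧ T.card = n / 2) :
    midSet n rep r ⊆ Finset.range n ∧ rep (midSet n rep r) = r ∧
      (midSet n rep r).card = n / 2 := by
  unfold midSet
  rw [dif_pos hr]
  exact ⟨hr.choose_spec.1, hr.choose_spec.2.1, hr.choose_spec.2.2⟩

open Classical in
/-- candidate sets for point j, coordinate i -/
noncomputable def candCards (n d : ℕ) (rep : Finset ℕ → Finset ℕ) (f : Finset ℕ → Fin d)
    (j : ℕ) (i : Fin d) : Finset ℕ :=
  ((Finset.range n).powerset.filter
    (fun T => f (midSet n rep (rep T)) = i ∧ j ∈ T)).image Finset.card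

open Classical in
noncomputable def ptc (n d : ℕ) (rep : Finset ℕ → Finset ℕ) (f : Finset ℕ → Fin d)
    (j : ℕ) (i : Fin d) : ℕ :=
  if hB : (candCards n d rep f j i).Nonempty then (candCards n d rep f j i).min' hB
  else n + 1

open Classical in
lemma ptc_le {n d : ℕ} {rep : Finset ℕ → Finset ℕ} {f : Finset ℕ → Fin d}
    {j : ℕ} {i : Fin d} {T : Finset ℕ} (hT : T ⊆ range n)
    (h1 : f (midSet n rep (rep T)) = i) (h2 : j ∈ T) :
    ptc n d rep f j i ≤ T.card := by
  have hmem : T.card ∈ candCards n d rep f j i := by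
    unfold candCards
    refine Finset.mem_image_of_mem _ ?_
    simp only [Finset.mem_filter, Finset.mem_powerset]
    exact ⟨hT, h1, h2⟩
  unfold ptc
  rw [dif_pos ⟨_, hmem⟩]
  exact Finset.min'_le _ _ hmem

open Classical in
lemma ptc_exists {n d : ℕ} {rep : Finset ℕ → Finset ℕ} {f : Finset ℕ → Fin d}
    {j : ℕ} {i : Fin d} (hle : ptc n d rep f j i ≤ n) :
    ∃ T ⊆ range n, f (midSet n rep (rep T)) = i ∧ j ∈ T ∧ T.card = ptc n d rep f j i := by
  by_cases hB : (candCards n d rep f j i).Nonempty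
  · have hmin : ptc n d rep f j i ∈ candCards n d rep f j i := by
      unfold ptc
      rw [dif_pos hB]
      exact Finset.min'_mem _ _
    unfold candCards at hmin
    obtain ⟨T, hT, hcard⟩ := Finset.mem_image.mp hmin
    simp only [Finset.mem_filter, Finset.mem_powerset] at hT
    exact ⟨T, hT.1, hT.2.1, hT.2.2, hcard⟩
  · exfalso
    unfold ptc at hle
    rw [dif_neg hB] at hle
    omega

lemma key_lemma {n d : ℕ} {rep : Finset ℕ → Finset ℕ} {f : Finset ℕ → Fin d}
    (G : GoodRep n rep)
    (hf : ∀ A ∈ Finset.powersetCard (n / 2) (range n),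
          ∀ B ∈ Finset.powersetCard (n / 2) (range n), f A = f B → A = B)
    (S : Finset ℕ) (hS : S ⊆ range n) (j : ℕ) :
    j ∈ S ↔ ptc n d rep f j (f (midSet n rep (rep S))) ≤ S.card := by
  have hmidmem : ∀ U : Finset ℕ, U ⊆ range n →
      midSet n rep (rep U) ∈ Finset.powersetCard (n / 2) (range n) := by
    intro U hU
    have := midSet_spec (exists_mid G U hU)
    exact Finset.mem_powersetCard.mpr ⟨this.1, this.2.2⟩
  constructor
  · intro hj
    exact ptc_le hS rfl hj
  · intro hle
    have hScard : S.card ≤ n := by simpa using Finset.card_le_card hS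
    obtain ⟨T, hT, hfT, hjT, hcard⟩ := ptc_exists (hle.trans hScard)
    have hmidT := midSet_spec (exists_mid G T hT)
    have hmidS := midSet_spec (exists_mid G S hS)
    have hmideq : midSet n rep (rep T) = midSet n rep (rep S) :=
      hf _ (hmidmem T hT) _ (hmidmem S hS) hfT
    have hrepeq : rep T = rep S := by
      rw [← hmidT.2.1, hmideq, hmidS.2.1]
    rcases G.comp T hT S hS hrepeq with hc | hc
    · exact hc hjT
    · have : S = T := Finset.eq_of_subset_of_card_le hc (by omega)
      exact this ▸ hjT

theorem choose_le_implies_shattered (d n : ℕ) (hn : 0 < n)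
    (h : n.choose (n / 2) ≤ d) :
    ∃ s : Finset (Fin d → ℝ), s.card = n ∧ Shatters (axisCuts d) s := by
  classical
  obtain ⟨rep, G⟩ := exists_goodRep n
  have hd : 0 < d := lt_of_lt_of_le (Nat.choose_pos (Nat.div_le_self n 2)) h
  set Mid := Finset.powersetCard (n / 2) (range n) with hMid
  have hMcard : Mid.card = n.choose (n / 2) := by
    simp [hMid]
  set L := Mid.toList with hL
  set f : Finset ℕ → Fin d := fun A => ⟨L.idxOf A % d, Nat.mod_lt _ hd⟩ with hfdef
  have hf : ∀ A ∈ Mid, ∀ B ∈ Mid, f A = f B → A = B := by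
    intro A hA B hB hfe
    have hAL : A ∈ L := by rw [hL]; exact Finset.mem_toList.mpr hA
    have hBL : B ∈ L := by rw [hL]; exact Finset.mem_toList.mpr hB
    have hlen : L.length ≤ d := by
      rw [hL, Finset.length_toList, hMcard]; exact h
    have h1 : L.idxOf A < d := lt_of_lt_of_le (List.idxOf_lt_length_iff.mpr hAL) hlen
    have h2 : L.idxOf B < d := lt_of_lt_of_le (List.idxOf_lt_length_iff.mpr hBL) hlen
    have heq : L.idxOf A = L.idxOf B := by
      have := congrArg Fin.val hfe
      simpa [hfdef, Nat.mod_eq_of_lt h1, Nat.mod_eq_of_lt h2] using this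
    exact (List.idxOf_inj hAL).mp heq
  have keyS : ∀ S ⊆ range n, ∀ j,
      j ∈ S ↔ ptc n d rep f j (f (midSet n rep (rep S))) ≤ S.card :=
    fun S hS j => key_lemma G hf S hS j
  set p : ℕ → Fin d → ℝ := fun j i => (ptc n d rep f j i : ℝ) with hp
  have hinj : Set.InjOn p (range n) := by
    intro j hj j' hj' hpe
    by_contra hne
    have hjn : j ∈ range n := hj
    have hjS : ({j} : Finset ℕ) ⊆ range n := Finset.singleton_subset_iff.mpr hjn
    set i := f (midSet n rep (rep ({j} : Finset ℕ))) with hi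
    have h1 : ptc n d rep f j i ≤ 1 := by
      have := (keyS {j} hjS j).mp (Finset.mem_singleton_self j)
      simpa using this
    have h2 : ¬ ptc n d rep f j' i ≤ 1 := by
      intro hcon
      have := (keyS {j} hjS j').mpr (by simpa using hcon)
      exact hne ((Finset.mem_singleton.mp this).symm)
    have : p j i = p j' i := by rw [hpe]
    rw [hp] at this
    simp only [Nat.cast_inj] at this
    omega
  refine ⟨(range n).image p, ?_, ?_⟩
  · rw [Finset.card_image_of_injOn hinj, card_range]
  · intro t ht
    set S := (range n).filter (fun j => p j ∈ t) with hSdef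
    have hSsub : S ⊆ range n := filter_subset _ _
    refine ⟨{x | x (f (midSet n rep (rep S))) ≤ (S.card : ℝ)},
      ⟨f (midSet n rep (rep S)), (S.card : ℝ), rfl⟩, ?_⟩
    ext x
    constructor
    · rintro ⟨hxs, hle⟩
      simp only [Finset.coe_image, Set.mem_image, Finset.mem_coe, Finset.mem_range] at hxs
      obtain ⟨j, hjn, rfl⟩ := hxs
      simp only [Set.mem_setOf_eq, hp] at hle
      have hcast : ptc n d rep f j (f (midSet n rep (rep S))) ≤ S.card := by
        exact_mod_cast hle
      have hjS : j ∈ S := (keyS S hSsub j).mpr hcast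
      exact (mem_filter.mp hjS).2
    · intro hx
      have hxs := ht hx
      refine ⟨hxs, ?_⟩
      simp only [Finset.coe_image, Set.mem_image, Finset.mem_coe, Finset.mem_range] at hxs
      obtain ⟨j, hjn, rfl⟩ := hxs
      have hjS : j ∈ S := mem_filter.mpr ⟨Finset.mem_range.mpr hjn, hx⟩
      have := (keyS S hSsub j).mp hjS
      simp only [Set.mem_setOf_eq, hp]
      exact_mod_cast this
end

section
/- Let A_d be the axis-parallel half-spaces of R^d. For every d ≥ 2, the VC dimension V of A_d satisfies log(d)/log(2) − 0.38 ≤ V ≤ log(d·sqrt(d+3))/log(2) + 0.51, where log is the natural logarithm. -/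
open Real

lemma two_pow_le_mid (n : ℕ) : 2^n ≤ (n+1) * n.choose (n/2) := by
  calc 2^n = ∑ i ∈ Finset.range (n+1), n.choose i := (Nat.sum_range_choose n).symm
    _ ≤ ∑ _i ∈ Finset.range (n+1), n.choose (n/2) :=
        Finset.sum_le_sum (fun i _ => Nat.choose_le_middle i n)
    _ = (n+1) * n.choose (n/2) := by simp [Finset.sum_const, mul_comm]

lemma cube_le (n : ℕ) (hn : 9 ≤ n) : (n+1)^3 ≤ 2^(n+1) := by
  induction n, hn using Nat.le_induction with
  | base => norm_num
  | succ n hn ih =>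
    have h1 : (n+1+1)^3 ≤ 2 * (n+1)^3 := by nlinarith [hn, sq_nonneg n, sq_nonneg (n-4)]
    calc (n+1+1)^3 ≤ 2 * (n+1)^3 := h1
      _ ≤ 2 * 2^(n+1) := by omega
      _ = 2^(n+1+1) := by ring

lemma four_pow_le (n d : ℕ) (hd : n.choose (n/2) ≤ d) : 4^n ≤ 2 * d^2 * (d+3) := by
  rcases le_or_gt n 8 with h8 | h8
  · interval_cases n <;> simp [Nat.choose] at hd <;> nlinarith
  · set c := n.choose (n/2) with hc
    have h1 : 2^n ≤ (n+1) * c := two_pow_le_mid n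
    have h2 : (n+1)^3 ≤ 2^(n+1) := cube_le n (by omega)
    have h3 : (n+1)^2 ≤ 2 * c := by
      have : (n+1) * (n+1)^2 ≤ (n+1) * (2*c) := by
        calc (n+1) * (n+1)^2 = (n+1)^3 := by ring
          _ ≤ 2^(n+1) := h2
          _ = 2 * 2^n := by ring
          _ ≤ 2 * ((n+1)*c) := by omega
          _ = (n+1) * (2*c) := by ring
      exact Nat.le_of_mul_le_mul_left this (by omega)
    calc 4^n = 2^n * 2^n := by rw [← Nat.pow_add, ← Nat.two_mul, Nat.pow_mul]
      _ ≤ ((n+1)*c) * ((n+1)*c) := Nat.mul_le_mul h1 h1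
      _ = (n+1)^2 * c^2 := by ring
      _ ≤ (2*c) * c^2 := Nat.mul_le_mul_right _ h3
      _ = 2 * c^2 * c := by ring
      _ ≤ 2 * d^2 * (d+3) := by
        have hcd : c ≤ d := hd
        have h1 : c^2 ≤ d^2 := Nat.pow_le_pow_left hcd 2
        have h2 : c ≤ d + 3 := by omega
        nlinarith

lemma shatter_exists (d m : ℕ) (hmd : 2^m ≤ d) :
    ∃ s : Finset (Fin d → ℝ), s.card = m + 1 ∧ Shatters (axisCuts d) s := by
  classical
  obtain ⟨κ⟩ : Nonempty (Finset (Fin m) ↪ Fin d) := by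
    apply Function.Embedding.nonempty_of_card_le
    simpa [Fintype.card_finset] using hmd
  set P : Fin (m+1) → Fin d → ℝ := fun j i =>
    if hj : j = Fin.last m then 1
    else if ∃ T : Finset (Fin m), κ T = i ∧ j.castPred hj ∈ T then 0 else 2 with hP
  have hPlast : ∀ i, P (Fin.last m) i = 1 := fun i => by simp [hP]
  have hPcs : ∀ (j : Fin m) (T : Finset (Fin m)),
      P j.castSucc (κ T) = if j ∈ T then 0 else 2 := by
    intro j T
    have hne : j.castSucc ≠ Fin.last m := (Fin.castSucc_lt_last j).ne
    rw [hP]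
    simp only [dif_neg hne]
    have hiff : (∃ T' : Finset (Fin m), κ T' = κ T ∧ (j.castSucc.castPred hne) ∈ T') ↔ j ∈ T := by
      constructor
      · rintro ⟨T', hT', hj'⟩
        cases κ.injective hT'
        simpa [Fin.castPred_castSucc] using hj'
      · intro hj
        exact ⟨T, rfl, by simpa [Fin.castPred_castSucc] using hj⟩
    simp [hiff]
  have hPinj : Function.Injective P := by
    intro j1 j2 h
    rcases Fin.eq_castSucc_or_eq_last j1 with ⟨a, rfl⟩ | rfl <;>
      rcases Fin.eq_castSucc_or_eq_last j2 with ⟨b, rfl⟩ | rfl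
    · by_cases hab : a = b
      · rw [hab]
      · have := congrFun h (κ {a})
        rw [hPcs, hPcs] at this
        simp [hab, Ne.symm hab] at this
    · have := congrFun h (κ ∅)
      rw [hPcs, hPlast] at this
      norm_num at this
    · have := congrFun h (κ ∅)
      rw [hPcs, hPlast] at this
      norm_num at this
    · rfl
  refine ⟨Finset.image P Finset.univ, ?_, ?_⟩
  · rw [Finset.card_image_of_injective _ hPinj, Finset.card_univ, Fintype.card_fin]
  · intro t ht
    set T0 : Finset (Fin m) := Finset.univ.filter (fun j => P j.castSucc ∈ t) with hT0
    set a : ℝ := if P (Fin.last m) ∈ t then 1 else 0 with ha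
    have ha0 : 0 ≤ a := by rw [ha]; split <;> norm_num
    have ha1 : a ≤ 1 := by rw [ha]; split <;> norm_num
    refine ⟨{x | x (κ T0) ≤ a}, ⟨κ T0, a, rfl⟩, ?_⟩
    ext x
    simp only [Set.mem_inter_iff, Set.mem_setOf_eq, Finset.coe_image, Finset.coe_univ,
      Set.image_univ, Set.mem_range]
    constructor
    · rintro ⟨⟨j, rfl⟩, hxa⟩
      rcases Fin.eq_castSucc_or_eq_last j with ⟨b, rfl⟩ | rfl
      · rw [hPcs] at hxa
        by_cases hb : b ∈ T0
        · exact (Finset.mem_filter.mp hb).2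
        · rw [if_neg hb] at hxa; linarith
      · rw [hPlast] at hxa
        by_contra hc
        rw [ha, if_neg hc] at hxa
        linarith
    · intro hxt
      obtain ⟨j, rfl⟩ : ∃ j, P j = x := by
        have := ht hxt
        simpa using this
      refine ⟨⟨j, rfl⟩, ?_⟩
      rcases Fin.eq_castSucc_or_eq_last j with ⟨b, rfl⟩ | rfl
      · have hb : b ∈ T0 := Finset.mem_filter.mpr ⟨Finset.mem_univ b, hxt⟩
        rw [hPcs, if_pos hb]
        exact ha0
      · rw [hPlast, ha, if_pos hxt]

lemma choose_le_dim (d : ℕ) (hd : 2 ≤ d) (s : Finset (Fin d → ℝ))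
    (hsh : Shatters (axisCuts d) s) : s.card.choose (s.card / 2) ≤ d := by
  classical
  set n := s.card with hn
  have hne : Nonempty (Fin d) := ⟨⟨0, by omega⟩⟩
  have hex : ∀ T : Finset (Fin d → ℝ), ∃ (i : Fin d) (a : ℝ),
      T ∈ s.powersetCard (n/2) → (↑s : Set (Fin d → ℝ)) ∩ {x | x i ≤ a} = ↑T := by
    intro T
    by_cases hT : T ∈ s.powersetCard (n/2)
    · have hsub : (↑T : Set (Fin d → ℝ)) ⊆ ↑s :=
        Finset.coe_subset.mpr (Finset.mem_powersetCard.mp hT).1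
      obtain ⟨A, hA, hAs⟩ := hsh ↑T hsub
      obtain ⟨i, a, rfl⟩ := hA
      exact ⟨i, a, fun _ => hAs⟩
    · exact ⟨Classical.arbitrary _, 0, fun h => absurd h hT⟩
  choose f g hf using hex
  have hinj : Set.InjOn f ↑(s.powersetCard (n/2)) := by
    intro T hT T' hT' hff
    have hmT := Finset.mem_coe.mp hT
    have hmT' := Finset.mem_coe.mp hT'
    have hcard : T.card = T'.card := by
      rw [(Finset.mem_powersetCard.mp hmT).2, (Finset.mem_powersetCard.mp hmT').2]
    have key : ∀ (U U' : Finset (Fin d → ℝ)), U ∈ s.powersetCard (n/2) →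
        U' ∈ s.powersetCard (n/2) → f U = f U' → g U ≤ g U' → U.card = U'.card → U = U' := by
      intro U U' hU hU' hfe hge hc
      have hsub : (↑U : Set (Fin d → ℝ)) ⊆ ↑U' := by
        rw [← hf U hU, ← hf U' hU', hfe]
        rintro x ⟨hx1, hx2⟩
        exact ⟨hx1, le_trans hx2 hge⟩
      exact Finset.eq_of_subset_of_card_le (Finset.coe_subset.mp hsub) (le_of_eq hc.symm)
    rcases le_total (g T) (g T') with hge | hge
    · exact key T T' hmT hmT' hff hge hcard
    · exact (key T' T hmT' hmT hff.symm hge hcard.symm).symm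
  have hle : (s.powersetCard (n/2)).card ≤ (Finset.univ : Finset (Fin d)).card :=
    Finset.card_le_card_of_injOn f (fun T _ => Finset.mem_univ (f T)) hinj
  rw [Finset.card_powersetCard, Finset.card_univ, Fintype.card_fin] at hle
  exact hle

theorem vc_axisCuts_log_bounds (d : ℕ) (hd : 2 ≤ d) (V : ℕ)
    (hV : IsGreatest {n : ℕ | ∃ s : Finset (Fin d → ℝ),
        s.card = n ∧ Shatters (axisCuts d) s} V) :
    Real.log d / Real.log 2 - 0.38 ≤ (V : ℝ) ∧
      (V : ℝ) ≤ Real.log (d * Real.sqrt (d + 3)) / Real.log 2 + 0.51 := by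
  have hl2 : (0:ℝ) < Real.log 2 := Real.log_pos (by norm_num)
  have hd0 : (0:ℝ) < d := by positivity
  have hd2 : (2:ℝ) ≤ d := by exact_mod_cast hd
  constructor
  · -- lower bound
    have hm : 2 ^ Nat.log 2 d ≤ d := Nat.pow_log_le_self 2 (by omega)
    obtain ⟨s, hs1, hs2⟩ := shatter_exists d (Nat.log 2 d) hm
    have hVge : Nat.log 2 d + 1 ≤ V := hV.2 ⟨s, hs1, hs2⟩
    have hVgeR : ((Nat.log 2 d : ℝ) + 1) ≤ V := by exact_mod_cast hVge
    have hdlt : (d:ℝ) < 2 ^ (Nat.log 2 d + 1) := by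
      exact_mod_cast Nat.lt_pow_succ_log_self (by norm_num) d
    have hlog : Real.log d < ((Nat.log 2 d : ℝ) + 1) * Real.log 2 := by
      have := Real.log_lt_log hd0 hdlt
      rw [Real.log_pow] at this
      push_cast at this
      exact this
    have : Real.log d / Real.log 2 < (Nat.log 2 d : ℝ) + 1 := by
      rw [div_lt_iff₀ hl2]; linarith
    linarith
  · -- upper bound
    obtain ⟨s, hs1, hs2⟩ := hV.1
    have h1 : V.choose (V/2) ≤ d := by
      have := choose_le_dim d hd s hs2
      rwa [hs1] at this
    have h2 : 4^V ≤ 2 * d^2 * (d+3) := four_pow_le V d h1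
    have h2R : (4:ℝ)^V ≤ 2 * (d:ℝ)^2 * ((d:ℝ)+3) := by exact_mod_cast h2
    have hlog4 : (V:ℝ) * (2 * Real.log 2) ≤
        Real.log 2 + 2 * Real.log d + Real.log ((d:ℝ)+3) := by
      have h := Real.log_le_log (by positivity) h2R
      rw [Real.log_pow] at h
      have h4 : Real.log 4 = 2 * Real.log 2 := by
        rw [show (4:ℝ) = 2^2 by norm_num, Real.log_pow]; push_cast; ring
      rw [h4] at h
      rw [Real.log_mul (by positivity) (by positivity),
        Real.log_mul (by norm_num) (by positivity), Real.log_pow] at h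
      push_cast at h ⊢
      linarith
    have hsq : Real.log ((d:ℝ) * Real.sqrt ((d:ℝ)+3)) =
        Real.log d + Real.log ((d:ℝ)+3) / 2 := by
      rw [Real.log_mul (ne_of_gt hd0) (ne_of_gt (Real.sqrt_pos.mpr (by linarith))),
        Real.log_sqrt (by linarith)]
    rw [hsq]
    have : ((V:ℝ) - 0.51) ≤ (Real.log d + Real.log ((d:ℝ)+3) / 2) / Real.log 2 := by
      rw [le_div_iff₀ hl2]
      nlinarith [hlog4, hl2.le]
    linarith
end
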